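/- arXiv:2504.21653 — 2 statements merged into one kernel-verified Lean document; each statement's English description precedes it below -/
import Mathlib

section
/- Let T be a tournament and u a vertex of T. If every ordered pair of distinct vertices (x,y) of T admits at least k directed 2-paths from x to y, then d⁺(u) ≥ 2k + 1 (provided d⁺(u) ≥ 1), since the subtournament induced on N⁺(u) has minimum in-degree at least k. -/
open Finset

variable {V : Type*} [Fintype V] [DecidableEq V]

/-- A tournament: irreflexive, and between any two distinct vertices exactly one arc. -/
def IsTournament (r : V → V → Prop) : Prop :=
  (∀ u, ¬ r u u) ∧ ∀ u v : V, u ≠ v → Xor' (r u v) (r v u)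

/-- Out-degree. -/
def outDeg (r : V → V → Prop) [DecidableRel r] (u : V) : ℕ :=
  (Finset.univ.filter fun v => r u v).card

/-- In-degree. -/
def inDeg (r : V → V → Prop) [DecidableRel r] (u : V) : ℕ :=
  (Finset.univ.filter fun v => r v u).card

/-- Number of directed 2-paths from `u` to `v`. -/
def p2 (r : V → V → Prop) [DecidableRel r] (u v : V) : ℕ :=
  (Finset.univ.filter fun w => r u w ∧ r w v).card

/-- `π` is the minimum of `p2` over ordered pairs of distinct vertices. -/
def IsPi2 (r : V → V → Prop) [DecidableRel r] (π : ℕ) : Prop :=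
  (∀ x y : V, x ≠ y → π ≤ p2 r x y) ∧ ∃ x y : V, x ≠ y ∧ p2 r x y = π

/-- `i` is the irregularity: the maximum of |d⁺(u) − d⁻(u)|. -/
def IsIrreg (r : V → V → Prop) [DecidableRel r] (i : ℕ) : Prop :=
  (∀ u : V, ((outDeg r u : ℤ) - inDeg r u).natAbs ≤ i) ∧
    ∃ u : V, ((outDeg r u : ℤ) - inDeg r u).natAbs = i

/-- A directed path, as a duplicate-free list whose consecutive members are arcs. -/
def IsDirPath (r : V → V → Prop) (l : List V) : Prop :=
  l.Nodup ∧ l.Chain' r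

/-- A path is extendable if some path with the same endpoints uses its vertices plus one more. -/
def Extendable (r : V → V → Prop) (l : List V) : Prop :=
  ∃ w ∉ l.toFinset, ∃ l' : List V, IsDirPath r l' ∧ l'.head? = l.head? ∧
    l'.getLast? = l.getLast? ∧ l'.toFinset = insert w l.toFinset

/-- Every nonhamiltonian path (on at least two vertices) is extendable. -/
def PathExtendable (r : V → V → Prop) : Prop :=
  ∀ l : List V, IsDirPath r l → 2 ≤ l.length →
    l.toFinset ≠ Finset.univ → Extendable r l

/-!
Every 2-path from `u` to an out-neighbour `v` runs through `N⁺(u)`, so the subtournament on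
`N⁺(u)` has minimum in-degree at least `k`. Its in-degrees sum to `n(n-1)/2` with `n = d⁺(u)`,
hence `k n ≤ n(n-1)/2`, i.e. `n ≥ 2k + 1` once `n ≥ 1`.
-/

namespace IsTournament

omit [Fintype V]

variable {r : V → V → Prop}

omit [DecidableEq V] in
theorem ne_of_rel (hT : IsTournament r) {u v : V} (h : r u v) : u ≠ v :=
  fun huv => hT.1 v (huv ▸ h)

omit [DecidableEq V] in
theorem not_rel_of_rel (hT : IsTournament r) {u v : V} (h : r u v) : ¬ r v u := by
  rcases hT.2 u v (hT.ne_of_rel h) with ⟨-, h'⟩ | ⟨-, h'⟩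
  · exact h'
  · exact absurd h h'

omit [DecidableEq V] in
theorem rel_or_rel (hT : IsTournament r) {u v : V} (h : u ≠ v) : r u v ∨ r v u := by
  rcases hT.2 u v h with ⟨h', -⟩ | ⟨h', -⟩
  · exact .inl h'
  · exact .inr h'

variable [DecidableRel r]

theorem card_filter_in_add_card_filter_out (hT : IsTournament r) {S : Finset V} {v : V}
    (hv : v ∈ S) : #{w ∈ S | r w v} + #{w ∈ S | r v w} = #S - 1 := by
  have hdisj : Disjoint {w ∈ S | r w v} {w ∈ S | r v w} :=
    disjoint_filter.mpr fun _ _ hwv => hT.not_rel_of_rel hwv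
  have hunion : {w ∈ S | r w v} ∪ {w ∈ S | r v w} = S.erase v := by
    ext w
    simp only [← filter_or, mem_filter, mem_erase]
    by_cases hwv : w = v
    · subst hwv
      simp [hT.1 w]
    · simp [hwv, hT.rel_or_rel hwv]
  rw [← card_union_of_disjoint hdisj, hunion, card_erase_of_mem hv]

theorem two_mul_sum_card_filter_in (hT : IsTournament r) (S : Finset V) :
    2 * ∑ v ∈ S, #{w ∈ S | r w v} = #S * (#S - 1) := by
  have hswap : ∑ v ∈ S, #{w ∈ S | r w v} = ∑ v ∈ S, #{w ∈ S | r v w} :=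
    (sum_card_bipartiteAbove_eq_sum_card_bipartiteBelow r).symm
  calc 2 * ∑ v ∈ S, #{w ∈ S | r w v}
      = ∑ v ∈ S, (#{w ∈ S | r w v} + #{w ∈ S | r v w}) := by
        rw [sum_add_distrib, ← hswap, two_mul]
    _ = ∑ _v ∈ S, (#S - 1) := sum_congr rfl fun v hv => hT.card_filter_in_add_card_filter_out hv
    _ = #S * (#S - 1) := by rw [sum_const, smul_eq_mul]

theorem two_mul_add_one_le_card (hT : IsTournament r) {S : Finset V} (hS : S.Nonempty) {k : ℕ}
    (hk : ∀ v ∈ S, k ≤ #{w ∈ S | r w v}) : 2 * k + 1 ≤ #S := by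
  have hsum : #S * k ≤ ∑ v ∈ S, #{w ∈ S | r w v} := by
    simpa [sum_const, smul_eq_mul] using sum_le_sum hk
  have h : #S * (2 * k) ≤ #S * (#S - 1) := by
    rw [← hT.two_mul_sum_card_filter_in S]
    linarith
  have hpos := hS.card_pos
  have : 2 * k ≤ #S - 1 := Nat.le_of_mul_le_mul_left h hpos
  omega

end IsTournament

omit [DecidableEq V] in
theorem p2_eq_card_filter_outNeighbors (r : V → V → Prop) [DecidableRel r] (u v : V) :
    p2 r u v = #{w ∈ {w | r u w} | r w v} := by
  rw [p2, filter_filter]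

theorem stmt7 (r : V → V → Prop) [DecidableRel r] (hT : IsTournament r)
    (k : ℕ) (hk : ∀ x y : V, x ≠ y → k ≤ p2 r x y)
    (u : V) (hu : 1 ≤ outDeg r u) :
    2 * k + 1 ≤ outDeg r u := by
  refine hT.two_mul_add_one_le_card (card_pos.mp hu) fun v hv => ?_
  have huv : r u v := (mem_filter.mp hv).2
  rw [← p2_eq_card_filter_outNeighbors]
  exact hk u v (hT.ne_of_rel huv)
end

section
/- Let T be a tournament with π₂(T) ≥ 1, and let P be a path in T on p vertices that is non-extendable (there is no path in T with the same endpoints whose vertex set is V(P) together with exactly one additional vertex). Then p ≥ 3·π₂(T) + 3. -/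
open Finset

variable {V : Type*} [Fintype V] [DecidableEq V]

/-!
Write the path as `u 0 → u 1 → ⋯ → u (p - 1)`. As no outside vertex `w` can be inserted between
two consecutive path vertices, every outside vertex has a threshold `t`: `w → u i` for `i < t`
and `u i → w` for `t ≤ i`. So all 2-paths from `u a` to `u b` with `a < b` stay on the path,
and a 2-path from `u a` back to `u b`, `b < a`, can only leave it through an outside vertex with
threshold in `(b, a]`. If no outside vertex has threshold `i + 1` or `i + 2`, the midpoints of
`(u i, u (i + 1))`, `(u (i + 1), u (i + 2))` and `(u (i + 2), u i)` are three disjoint sets of at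
least `π` path vertices, none of them `u i`, `u (i + 1)`, `u (i + 2)`; hence `p ≥ 3π + 3`.
Otherwise thresholds occur densely. Take the first threshold `k` that receives an arc from some
`u a` with `a ≤ k - 2` (one exists, by the same counting near the end of the path). Rerouting
through the outside vertex at `k` forces `u b → u (k - 1)` for all `b > k`, and a case analysis
on the thresholds `k - 1`, `k - 2` then always yields either a path with the same endpoints
through one more vertex, or a pair of vertices with fewer than `π` midpoints.
-/

section

variable {α : Type*} {r : α → α → Prop}

namespace IsTournament

theorem asymm (hT : IsTournament r) {x y : α} (h : r x y) : ¬ r y x := by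
  rcases eq_or_ne x y with rfl | hxy
  · exact absurd h (hT.1 x)
  · rcases hT.2 x y hxy with ⟨-, h'⟩ | ⟨-, h'⟩
    exacts [h', absurd h h']

theorem rel_of_not_rel (hT : IsTournament r) {x y : α} (hxy : x ≠ y) (h : ¬ r x y) : r y x := by
  rcases hT.2 x y hxy with ⟨h', -⟩ | ⟨h', -⟩
  exacts [absurd h' h, h']

end IsTournament

namespace List

theorem head?_Ico {s e : ℕ} (h : s < e) : (Ico s e).head? = some s := by
  simp [Ico, head?_range']
  omega

theorem getLast?_Ico {s e : ℕ} (h : s < e) : (Ico s e).getLast? = some (e - 1) := by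
  simp [Ico, getLast?_range']
  omega

theorem isChain_Ico {R : ℕ → ℕ → Prop} {s e : ℕ} (h : ∀ i, s ≤ i → i + 1 < e → R i (i + 1)) :
    (Ico s e).IsChain R := by
  rw [isChain_iff_getElem]
  intro i hi
  rw [Ico.length] at hi
  simp only [Ico, getElem_range']
  simpa [Nat.add_assoc] using h (s + i) (by omega) (by omega)

theorem exists_eq_map_range {l : List α} (hl : l ≠ []) :
    ∃ (p : ℕ) (u : ℕ → α), l = (range p).map u :=
  ⟨l.length, (l.getD · (l.head hl)), ext_getElem (by simp) fun i _ _ => by simp_all⟩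

end List

def IsThreshold (r : α → α → Prop) (u : ℕ → α) (p : ℕ) (w : α) (t : ℕ) : Prop :=
  (∀ i < t, r w (u i)) ∧ ∀ i, t ≤ i → i < p → r (u i) w

def HasThresholdVertex (r : α → α → Prop) (u : ℕ → α) (p t : ℕ) : Prop :=
  ∃ w, (∀ i < p, u i ≠ w) ∧ IsThreshold r u p w t

def IsJumpThreshold (r : α → α → Prop) (u : ℕ → α) (p k : ℕ) : Prop :=
  HasThresholdVertex r u p k ∧ k + 2 ≤ p ∧ ∃ a, a + 2 ≤ k ∧ r (u a) (u k)

def midpoints (r : α → α → Prop) [DecidableRel r] (u : ℕ → α) (p a b : ℕ) : Finset ℕ :=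
  (Finset.range p).filter fun c => r (u a) (u c) ∧ r (u c) (u b)

theorem mem_midpoints [DecidableRel r] {u : ℕ → α} {p a b c : ℕ} :
    c ∈ midpoints r u p a b ↔ c < p ∧ r (u a) (u c) ∧ r (u c) (u b) := by
  simp [midpoints]

open Function in
theorem injOn_update {u : ℕ → α} {p : ℕ} (hu : Set.InjOn u (Set.Iio p)) {w : α}
    (hw : ∀ i < p, u i ≠ w) : Set.InjOn (update u p w) (Set.Iic p) := by
  intro i hi j hj hij
  rcases (Set.mem_Iic.mp hi).lt_or_eq with hi | rfl <;>
    rcases (Set.mem_Iic.mp hj).lt_or_eq with hj | rfl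
  · simp only [update_of_ne hi.ne, update_of_ne hj.ne] at hij
    exact hu hi hj hij
  · simp only [update_of_ne hi.ne, update_self] at hij
    exact absurd hij (hw i hi)
  · simp only [update_of_ne hj.ne, update_self] at hij
    exact absurd hij.symm (hw j hj)
  · rfl

variable [DecidableEq α]

open Function in
/-- The rerouted path is the list `J` of indices, in which `p` stands for the new vertex `w`. -/
theorem extendable_of_reroute {u : ℕ → α} {p : ℕ} (hp : 0 < p) (hu : Set.InjOn u (Set.Iio p))
    {w : α} (hw : ∀ i < p, u i ≠ w) (J : List ℕ) (hcover : ∀ i ≤ p, i ∈ J)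
    (hlen : J.length ≤ p + 1) (hhead : J.head? = some 0) (hlast : J.getLast? = some (p - 1))
    (hchain : J.IsChain fun i j => r (update u p w i) (update u p w j)) :
    Extendable r ((List.range p).map u) := by
  -- `J` lists all of `0, …, p` in at most `p + 1` entries, so it is a permutation of them.
  have hJ : J.toFinset = Finset.range (p + 1) := by
    refine (Finset.eq_of_subset_of_card_le (fun i hi => ?_) ?_).symm
    · exact List.mem_toFinset.mpr (hcover i (by simpa [Nat.lt_succ_iff] using hi))
    · simpa using J.toFinset_card_le.trans hlen
  have hmem {i : ℕ} : i ∈ J ↔ i ≤ p := by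
    rw [← List.mem_toFinset, hJ, Finset.mem_range, Nat.lt_succ_iff]
  have hJnd : J.Nodup := Multiset.toFinset_card_eq_card_iff_nodup.mp
    (le_antisymm J.toFinset_card_le (by simpa [hJ] using hlen))
  refine ⟨w, by simpa using hw, J.map (update u p w),
    ⟨hJnd.map_on fun i hi j hj => injOn_update hu hw (hmem.mp hi) (hmem.mp hj),
      (List.isChain_map _).mpr hchain⟩, ?_, ?_, ?_⟩
  · simp [hhead, update_of_ne hp.ne, List.head?_range, hp.ne']
  · simp [hlast, update_of_ne (Nat.sub_lt hp one_pos).ne, List.getLast?_range, hp.ne']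
  · ext x
    simp only [List.mem_toFinset, List.mem_map, hmem, Finset.mem_insert, List.mem_range]
    constructor
    · rintro ⟨i, hi, rfl⟩
      rcases hi.lt_or_eq with hi | rfl
      · exact .inr ⟨i, hi, (update_of_ne hi.ne ..).symm⟩
      · exact .inl (update_self ..)
    · rintro (rfl | ⟨i, hi, rfl⟩)
      · exact ⟨p, le_rfl, update_self ..⟩
      · exact ⟨i, hi.le, update_of_ne hi.ne ..⟩

structure NonextendablePath (r : α → α → Prop) (u : ℕ → α) (p : ℕ) : Prop where
  tournament : IsTournament r
  two_le : 2 ≤ p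
  injOn : Set.InjOn u (Set.Iio p)
  rel_succ : ∀ i, i + 1 < p → r (u i) (u (i + 1))
  not_extendable : ¬ Extendable r ((List.range p).map u)

namespace NonextendablePath

open Function

variable {u : ℕ → α} {p : ℕ}

theorem of_isDirPath (hT : IsTournament r) (hl : IsDirPath r ((List.range p).map u))
    (hp : 2 ≤ p) (hne : ¬ Extendable r ((List.range p).map u)) : NonextendablePath r u p where
  tournament := hT
  two_le := hp
  injOn i hi j hj hij :=
    List.inj_on_of_nodup_map hl.1 (List.mem_range.mpr hi) (List.mem_range.mpr hj) hij
  rel_succ i hi := by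
    have := List.isChain_iff_getElem.mp hl.2 i (by simpa using hi)
    simpa using this
  not_extendable := hne

theorem ne (S : NonextendablePath r u p) {i j : ℕ} (hi : i < p) (hj : j < p) (hij : i ≠ j) :
    u i ≠ u j :=
  fun h => hij (S.injOn hi hj h)

theorem rel_of_not_rel (S : NonextendablePath r u p) {i j : ℕ} (hi : i < p) (hj : j < p)
    (hij : i ≠ j) (h : ¬ r (u i) (u j)) : r (u j) (u i) :=
  S.tournament.rel_of_not_rel (S.ne hi hj hij) h

theorem isChain_Ico (S : NonextendablePath r u p) (w : α) {s e : ℕ} (he : e ≤ p) :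
    (List.Ico s e).IsChain fun i j => r (update u p w i) (update u p w j) :=
  List.isChain_Ico fun i _ hi => by
    simpa [update_of_ne (show i ≠ p by omega), update_of_ne (show i + 1 ≠ p by omega)]
      using S.rel_succ i (by omega)

theorem false_of_reroute (S : NonextendablePath r u p) {w : α} (hw : ∀ i < p, u i ≠ w)
    (J : List ℕ) (hcover : ∀ i ≤ p, i ∈ J) (hlen : J.length ≤ p + 1) (hhead : J.head? = some 0)
    (hlast : J.getLast? = some (p - 1))
    (hchain : J.IsChain fun i j => r (update u p w i) (update u p w j)) : False :=
  S.not_extendable <|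
    extendable_of_reroute (by have := S.two_le; omega) S.injOn hw J hcover hlen hhead hlast hchain

theorem not_rel_and_rel_succ (S : NonextendablePath r u p) {w : α} (hw : ∀ i < p, u i ≠ w)
    {i : ℕ} (hi : i + 1 < p) : ¬ (r (u i) w ∧ r w (u (i + 1))) := by
  rintro ⟨h₁, h₂⟩
  refine S.false_of_reroute hw (List.Ico 0 (i + 1) ++ [p] ++ List.Ico (i + 1) p)
    (fun j _ => by simp [List.Ico.mem]; omega) (by simp [List.Ico.length]; omega)
    (by simp (disch := omega) [List.head?_Ico])
    (by simp (disch := omega) [List.getLast?_Ico, List.getLast?_cons]) ?_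
  simp (disch := omega) [List.isChain_append, List.isChain_cons, List.head?_Ico,
    List.getLast?_Ico, update_of_ne, S.isChain_Ico, h₁, h₂]

theorem rel_of_rel_of_le (S : NonextendablePath r u p) {w : α} (hw : ∀ i < p, u i ≠ w)
    {i j : ℕ} (hij : i ≤ j) (hj : j < p) (h : r (u i) w) : r (u j) w := by
  induction j, hij using Nat.le_induction with
  | base => exact h
  | succ j _ ih =>
    by_contra hn
    exact S.not_rel_and_rel_succ hw hj
      ⟨ih (by omega), S.tournament.rel_of_not_rel (hw _ hj) hn⟩

theorem exists_isThreshold (S : NonextendablePath r u p) {w : α} (hw : ∀ i < p, u i ≠ w) :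
    ∃ t, IsThreshold r u p w t := by
  classical
  have hex : ∃ t, ∀ i, t ≤ i → i < p → r (u i) w := ⟨p, fun i hi hi' => absurd hi' (by omega)⟩
  refine ⟨Nat.find hex, fun i hi => ?_, Nat.find_spec hex⟩
  by_contra hn
  have hiw := S.tournament.rel_of_not_rel (hw i (hi.trans_le (Nat.find_min' hex
    fun j hj hj' => absurd hj' (by omega)))).symm hn
  exact Nat.find_min hex hi fun j hij hj => S.rel_of_rel_of_le hw hij hj hiw

theorem exists_hasThresholdVertex (S : NonextendablePath r u p) {w : α}
    (hw : ∀ i < p, u i ≠ w) {a b : ℕ} (hb : b < p) (h : r (u a) w ∧ r w (u b)) :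
    ∃ t, b < t ∧ t ≤ a ∧ HasThresholdVertex r u p t := by
  obtain ⟨t, hlt, hge⟩ := S.exists_isThreshold hw
  refine ⟨t, ?_, ?_, w, hw, hlt, hge⟩
  · by_contra! hbt
    exact S.tournament.asymm (hge b hbt hb) h.2
  · by_contra! hat
    exact S.tournament.asymm (hlt a hat) h.1

theorem midpoint_far (S : NonextendablePath r u p) {i j c : ℕ} (hij : i + 1 = j) (hj : j < p)
    (hc : c < p) (h₁ : r (u i) (u c)) (h₂ : r (u c) (u j)) : c + 2 ≤ i ∨ j + 2 ≤ c := by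
  subst hij
  have hT := S.tournament
  by_contra! h
  obtain rfl | rfl | rfl | rfl : c + 1 = i ∨ c = i ∨ c = i + 1 ∨ c = i + 2 := by omega
  · exact hT.asymm (S.rel_succ c (by omega)) h₁
  · exact hT.1 _ h₁
  · exact hT.1 _ h₂
  · exact hT.asymm (S.rel_succ (i + 1) hc) h₂

theorem rel_of_not_isJumpThreshold (S : NonextendablePath r u p) {k : ℕ}
    (hk : HasThresholdVertex r u p k) (hkp : k + 2 ≤ p) (hn : ¬ IsJumpThreshold r u p k)
    {a : ℕ} (ha : a + 2 ≤ k) : r (u k) (u a) :=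
  S.rel_of_not_rel (by omega) (by omega) (by omega) fun hak => hn ⟨hk, hkp, a, ha, hak⟩

theorem rel_pred_of_isThreshold (S : NonextendablePath r u p) {w : α} (hw : ∀ i < p, u i ≠ w)
    {k : ℕ} (hk : IsThreshold r u p w k) {a b : ℕ} (ha : a + 1 < k) (hak : r (u a) (u k))
    (hkb : k < b) (hb : b < p) : r (u b) (u (k - 1)) := by
  refine S.rel_of_not_rel (by omega) hb (by omega) fun hkb' => ?_
  refine S.false_of_reroute hw
    (List.Ico 0 (a + 1) ++ List.Ico k b ++ [p] ++ List.Ico (a + 1) k ++ List.Ico b p)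
    (fun j _ => by simp [List.Ico.mem]; omega) (by simp [List.Ico.length]; omega)
    (by simp (disch := omega) [List.head?_Ico])
    (by simp (disch := omega) [List.getLast?_Ico, List.getLast?_cons]) ?_
  simp (disch := omega) [List.isChain_append, List.isChain_cons, List.head?_Ico,
    List.getLast?_Ico, update_of_ne, S.isChain_Ico, hak, hkb',
    hk.1 (a + 1) (by omega), hk.2 (b - 1) (by omega) (by omega)]

theorem not_rel_pred_add_three (S : NonextendablePath r u p) {w : α} (hw : ∀ i < p, u i ≠ w)
    {K : ℕ} (hK : IsThreshold r u p w K) (hKp : K + 4 ≤ p) (h₁ : r (u (K + 2)) (u K)) {z : ℕ}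
    (hz : z + 2 ≤ K) (h₂ : r (u z) (u (K + 2))) : ¬ r (u (K - 1)) (u (K + 3)) := by
  intro h₃
  refine S.false_of_reroute hw (List.Ico 0 (z + 1) ++ [K + 2, K, K + 1, p] ++
    List.Ico (z + 1) K ++ List.Ico (K + 3) p)
    (fun j _ => by simp [List.Ico.mem]; omega) (by simp [List.Ico.length]; omega)
    (by simp (disch := omega) [List.head?_Ico])
    (by simp (disch := omega) [List.getLast?_Ico, List.getLast?_cons]) ?_
  simp (disch := omega) [List.isChain_append, List.isChain_cons, List.head?_Ico,
    List.getLast?_Ico, update_of_ne, S.isChain_Ico, h₁, h₂, h₃, S.rel_succ K,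
    hK.2 (K + 1) (by omega) (by omega), hK.1 (z + 1) (by omega)]

theorem not_rel_sub_two_add_two (S : NonextendablePath r u p) {w : α} (hw : ∀ i < p, u i ≠ w)
    {K : ℕ} (hK : IsThreshold r u p w (K + 2)) (hK2 : 2 ≤ K) (h₁ : r (u (K + 1)) (u (K - 1)))
    {z : ℕ} (hz : K + 3 ≤ z) (hzp : z < p) (h₂ : r (u (K - 1)) (u z)) :
    ¬ r (u (K - 2)) (u (K + 2)) := by
  intro h₃
  refine S.false_of_reroute hw (List.Ico 0 (K - 1) ++ List.Ico (K + 2) z ++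
    [p, K, K + 1, K - 1] ++ List.Ico z p)
    (fun j _ => by simp [List.Ico.mem]; omega) (by simp [List.Ico.length]; omega)
    (by simp (disch := omega) [List.head?_Ico])
    (by simp (disch := omega) [List.getLast?_Ico, List.getLast?_cons]) ?_
  simp (disch := omega) [List.isChain_append, List.isChain_cons, List.head?_Ico,
    List.getLast?_Ico, update_of_ne, S.isChain_Ico, h₁, h₂, h₃, S.rel_succ K, Nat.sub_sub,
    hK.2 (z - 1) (by omega) (by omega), hK.1 K (by omega)]

variable [Fintype α] [DecidableRel r] {π : ℕ}

theorem pi_le_card_midpoints (S : NonextendablePath r u p) (hπ : IsPi2 r π) {a b : ℕ}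
    (ha : a < p) (hb : b < p) (hab : a ≠ b)
    (hsafe : ∀ t, b < t → t ≤ a → ¬ HasThresholdVertex r u p t) :
    π ≤ (midpoints r u p a b).card := by
  calc π ≤ p2 r (u a) (u b) := hπ.1 _ _ (S.ne ha hb hab)
    _ ≤ ((midpoints r u p a b).image u).card := Finset.card_le_card ?_
    _ ≤ _ := Finset.card_image_le
  intro x hx
  simp only [Finset.mem_filter, Finset.mem_univ, true_and] at hx
  by_cases hxp : ∃ c < p, u c = x
  · obtain ⟨c, hc, rfl⟩ := hxp
    exact Finset.mem_image_of_mem u (mem_midpoints.mpr ⟨hc, hx⟩)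
  · push Not at hxp
    obtain ⟨t, hbt, hta, ht⟩ := S.exists_hasThresholdVertex hxp hb hx
    exact absurd ht (hsafe t hbt hta)

theorem pi_le_card_of_midpoints_subset (S : NonextendablePath r u p) (hπ : IsPi2 r π)
    {a b : ℕ} (ha : a < p) (hb : b < p) (hab : a ≠ b)
    (hsafe : ∀ t, b < t → t ≤ a → ¬ HasThresholdVertex r u p t) {s : Finset ℕ}
    (hs : ∀ c < p, r (u a) (u c) → r (u c) (u b) → c ∈ s) : π ≤ s.card :=
  (S.pi_le_card_midpoints hπ ha hb hab hsafe).trans <| Finset.card_le_card fun c hc => by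
    obtain ⟨hc, h₁, h₂⟩ := mem_midpoints.mp hc
    exact hs c hc h₁ h₂

theorem exists_midpoint (S : NonextendablePath r u p) (hπ : IsPi2 r π) (h1 : 1 ≤ π)
    {a b : ℕ} (ha : a < p) (hb : b < p) (hab : a ≠ b)
    (hsafe : ∀ t, b < t → t ≤ a → ¬ HasThresholdVertex r u p t) :
    ∃ c < p, r (u a) (u c) ∧ r (u c) (u b) := by
  by_contra! h
  have := S.pi_le_card_of_midpoints_subset hπ ha hb hab hsafe (s := ∅)
    fun c hc h₁ h₂ => absurd h₂ (h c hc h₁)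
  simp at this
  omega

theorem exists_midpoint_ne (S : NonextendablePath r u p) (hπ : IsPi2 r π) (h2 : 2 ≤ π)
    {a b : ℕ} (ha : a < p) (hb : b < p) (hab : a ≠ b)
    (hsafe : ∀ t, b < t → t ≤ a → ¬ HasThresholdVertex r u p t) (e : ℕ) :
    ∃ c < p, c ≠ e ∧ r (u a) (u c) ∧ r (u c) (u b) := by
  by_contra! h
  have := S.pi_le_card_of_midpoints_subset hπ ha hb hab hsafe (s := {e})
    fun c hc h₁ h₂ => Finset.mem_singleton.mpr (by_contra fun hce => h c hc hce h₁ h₂)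
  simp at this
  omega

theorem three_mul_add_three_le (S : NonextendablePath r u p) (hπ : IsPi2 r π) {i : ℕ}
    (hi : i + 3 ≤ p) (h₁ : ¬ HasThresholdVertex r u p (i + 1))
    (h₂ : ¬ HasThresholdVertex r u p (i + 2)) : 3 * π + 3 ≤ p := by
  have hT := S.tournament
  set A := midpoints r u p i (i + 1)
  set B := midpoints r u p (i + 1) (i + 2)
  set C := midpoints r u p (i + 2) i
  set D : Finset ℕ := {i, i + 1, i + 2}
  have hA : π ≤ A.card := S.pi_le_card_midpoints hπ (by omega) (by omega) (by omega) (by omega)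
  have hB : π ≤ B.card := S.pi_le_card_midpoints hπ (by omega) (by omega) (by omega) (by omega)
  have hC : π ≤ C.card := S.pi_le_card_midpoints hπ (by omega) (by omega) (by omega)
    fun t ht ht' => by
      obtain rfl | rfl : t = i + 1 ∨ t = i + 2 := by omega
      exacts [h₁, h₂]
  have hD : D.card = 3 := by simp [D]
  have hAB : Disjoint A B := Finset.disjoint_left.mpr fun c hA hB =>
    hT.asymm (mem_midpoints.mp hA).2.2 (mem_midpoints.mp hB).2.1
  have hAC : Disjoint A C := Finset.disjoint_left.mpr fun c hA hC =>
    hT.asymm (mem_midpoints.mp hA).2.1 (mem_midpoints.mp hC).2.2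
  have hBC : Disjoint B C := Finset.disjoint_left.mpr fun c hB hC =>
    hT.asymm (mem_midpoints.mp hB).2.2 (mem_midpoints.mp hC).2.1
  have hABCD : Disjoint (A ∪ B ∪ C) D := Finset.disjoint_right.mpr fun c hD hABC => by
    simp only [D, A, B, C, Finset.mem_union, Finset.mem_insert, Finset.mem_singleton,
      mem_midpoints] at hD hABC
    have := S.rel_succ i (by omega)
    have := S.rel_succ (i + 1) (by omega)
    rcases hD with rfl | rfl | rfl <;> grind [hT.asymm, hT.1]
  have hsub : A ∪ B ∪ C ∪ D ⊆ Finset.range p := by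
    intro c hc
    simp only [A, B, C, D, Finset.mem_union, Finset.mem_insert, Finset.mem_singleton,
      mem_midpoints, Finset.mem_range] at hc ⊢
    omega
  calc 3 * π + 3 ≤ (A ∪ B ∪ C ∪ D).card := by
        rw [Finset.card_union_of_disjoint hABCD, Finset.card_union_of_disjoint
          (Finset.disjoint_union_left.mpr ⟨hAC, hBC⟩), Finset.card_union_of_disjoint hAB]
        omega
    _ ≤ p := by simpa using Finset.card_le_card hsub

structure Counterexample (r : α → α → Prop) [DecidableRel r] (u : ℕ → α) (p π : ℕ) : Prop
    extends NonextendablePath r u p where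
  isPi2 : IsPi2 r π
  one_le_pi : 1 ≤ π
  lt : p < 3 * π + 3

namespace Counterexample

theorem exists_midpoint_of_lt (C : Counterexample r u p π) {a b : ℕ} (hab : a < b)
    (hb : b < p) : ∃ c < p, r (u a) (u c) ∧ r (u c) (u b) :=
  C.exists_midpoint C.isPi2 C.one_le_pi (by omega) hb (by omega) fun _ _ _ => by omega

theorem six_le (C : Counterexample r u p π) : 6 ≤ p := by
  have hT := C.tournament
  have := C.two_le
  by_contra! hp
  have mid_far {i : ℕ} (hi : i + 1 < p) : ∃ c < p, (c + 2 ≤ i ∨ i + 3 ≤ c) ∧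
      r (u i) (u c) ∧ r (u c) (u (i + 1)) := by
    obtain ⟨c, hc, h₁, h₂⟩ := C.exists_midpoint_of_lt (lt_add_one i) hi
    exact ⟨c, hc, C.midpoint_far rfl hi hc h₁ h₂, h₁, h₂⟩
  obtain hp | hp | rfl : p ≤ 3 ∨ p = 4 ∨ p = 5 := by omega
  · obtain ⟨c, hc, hfar, -⟩ := mid_far (i := 0) (by omega)
    omega
  · obtain ⟨c, hc, hfar, -⟩ := mid_far (i := 1) (by omega)
    omega
  -- For `p = 5` the midpoints of consecutive pairs are forced, leaving none for `(u 1, u 4)`.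
  obtain ⟨c, hc, hfar, h14, h42⟩ := mid_far (i := 1) (by omega)
  obtain rfl : c = 4 := by omega
  obtain ⟨c, hc, hfar, -, h03⟩ := mid_far (i := 2) (by omega)
  obtain rfl : c = 0 := by omega
  obtain ⟨c, hc, hfar, h31, -⟩ := mid_far (i := 3) (by omega)
  obtain rfl | rfl : c = 0 ∨ c = 1 := by omega
  · exact hT.asymm h03 h31
  obtain ⟨c, hc, h₁, h₂⟩ := C.exists_midpoint_of_lt (a := 1) (b := 4) (by omega) (by omega)
  interval_cases c <;> grind [hT.asymm, hT.1, C.rel_succ]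

theorem two_le_pi (C : Counterexample r u p π) : 2 ≤ π := by
  have := C.six_le
  have := C.lt
  omega

theorem exists_midpoint_ne_of_lt (C : Counterexample r u p π) {a b : ℕ} (hab : a < b)
    (hb : b < p) (e : ℕ) : ∃ c < p, c ≠ e ∧ r (u a) (u c) ∧ r (u c) (u b) :=
  C.exists_midpoint_ne C.isPi2 C.two_le_pi (by omega) hb (by omega) (fun _ _ _ => by omega) e

theorem hasThresholdVertex_of_add_three_le (C : Counterexample r u p π) {i : ℕ}
    (hi : i + 3 ≤ p) : HasThresholdVertex r u p (i + 1) ∨ HasThresholdVertex r u p (i + 2) := by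
  by_contra! h
  have := C.three_mul_add_three_le C.isPi2 hi h.1 h.2
  have := C.lt
  omega

theorem exists_isJumpThreshold (C : Counterexample r u p π) : ∃ k, IsJumpThreshold r u p k := by
  by_contra! h
  have hT := C.tournament
  have := C.six_le
  rcases C.hasThresholdVertex_of_add_three_le (i := p - 4) (by omega) with hk | hk
  · obtain ⟨c, hc, hne, h₁, h₂⟩ :=
      C.exists_midpoint_ne_of_lt (a := p - 4) (b := p - 4 + 1) (by omega) (by omega) (p - 1)
    rcases C.midpoint_far (by omega) (by omega) hc h₁ h₂ with hfar | hfar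
    · exact hT.asymm (C.rel_of_not_isJumpThreshold hk (by omega) (h _) (a := c) (by omega)) h₂
    · omega
  · obtain ⟨c, hc, h₁, h₂⟩ :=
      C.exists_midpoint_of_lt (a := p - 4 + 1) (b := p - 4 + 2) (by omega) (by omega)
    rcases C.midpoint_far (by omega) (by omega) hc h₁ h₂ with hfar | hfar
    · exact hT.asymm (C.rel_of_not_isJumpThreshold hk (by omega) (h _) (a := c) (by omega)) h₂
    · omega

theorem four_le_of_isJumpThreshold (C : Counterexample r u p π) {k : ℕ}
    (hk : IsJumpThreshold r u p k) : 4 ≤ k := by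
  obtain ⟨⟨w, hw, hthr⟩, hkp, a, ha, hak⟩ := hk
  by_contra! hk4
  obtain ⟨c, hc, hc0, h₁, h₂⟩ :=
    C.exists_midpoint_ne_of_lt (a := k - 1) (b := k) (by omega) (by omega) 0
  rcases C.midpoint_far (by omega) (by omega) hc h₁ h₂ with hfar | hfar
  · omega
  · exact C.tournament.asymm (C.rel_pred_of_isThreshold hw hthr (by omega) hak (by omega) hc) h₁

theorem exists_midpoint_pred_self (C : Counterexample r u p π) {K : ℕ} (hK : 1 ≤ K)
    (hKp : K + 2 < p) (hbelow : ∀ c, c + 2 ≤ K → r (u K) (u c)) :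
    ∃ z < p, K + 3 ≤ z ∧ r (u (K - 1)) (u z) ∧ r (u z) (u K) := by
  obtain ⟨z, hz, hne, h₁, h₂⟩ :=
    C.exists_midpoint_ne_of_lt (a := K - 1) (b := K) (by omega) (by omega) (K + 2)
  refine ⟨z, hz, ?_, h₁, h₂⟩
  rcases C.midpoint_far (by omega) (by omega) hz h₁ h₂ with h | h
  · exact absurd h₂ (C.tournament.asymm (hbelow z (by omega)))
  · omega

theorem not_hasThresholdVertex_of_isJumpThreshold_succ (C : Counterexample r u p π) {K : ℕ}
    (hk : IsJumpThreshold r u p (K + 1)) (hmin : ¬ IsJumpThreshold r u p K) :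
    ¬ HasThresholdVertex r u p K := by
  intro hK
  have ⟨wK, hwK, hthrK⟩ := hK
  obtain ⟨⟨w, hw, hthr⟩, hkp, a, ha, hak⟩ := hk
  have hT := C.tournament
  have habove {b : ℕ} (hb : K + 1 < b) (hbp : b < p) : r (u b) (u K) := by
    simpa using C.rel_pred_of_isThreshold hw hthr (by omega) hak hb hbp
  have hbelow (c : ℕ) (hc : c + 2 ≤ K) : r (u K) (u c) :=
    C.rel_of_not_isJumpThreshold hK (by omega) hmin hc
  obtain ⟨z₁, hz₁, h₁, h₂⟩ := C.exists_midpoint_of_lt (a := K) (b := K + 1) (by omega) (by omega)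
  have hz₁K : z₁ + 2 ≤ K := (C.midpoint_far rfl (by omega) hz₁ h₁ h₂).resolve_right
    fun h => hT.asymm (habove (by omega) hz₁) h₁
  obtain ⟨z₂, hz₂, hz₂K, h₃, -⟩ := C.exists_midpoint_pred_self (by omega) (by omega) hbelow
  refine C.false_of_reroute hwK (List.Ico 0 (z₁ + 1) ++ List.Ico (K + 1) z₂ ++ [K, p] ++
    List.Ico (z₁ + 1) K ++ List.Ico z₂ p)
    (fun j _ => by simp [List.Ico.mem]; omega) (by simp [List.Ico.length]; omega)
    (by simp (disch := omega) [List.head?_Ico])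
    (by simp (disch := omega) [List.getLast?_Ico, List.getLast?_cons]) ?_
  simp (disch := omega) [List.isChain_append, List.isChain_cons, List.head?_Ico,
    List.getLast?_Ico, update_of_ne, C.isChain_Ico, h₂, h₃,
    habove (b := z₂ - 1) (by omega) (by omega),
    hthrK.2 K le_rfl (by omega), hthrK.1 (z₁ + 1) (by omega)]

theorem false_of_eight (C : Counterexample r u 8 π) (h31 : r (u 3) (u 1)) (h64 : r (u 6) (u 4))
    (h74 : r (u 7) (u 4)) (h53 : r (u 5) (u 3)) (h73 : r (u 7) (u 3)) (h40 : r (u 4) (u 0))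
    (h05 : r (u 0) (u 5)) : False := by
  -- Each pair below has exactly one admissible midpoint besides the excluded one; the last has
  -- only `u 3`, contradicting `π ≥ 2`.
  have hT := C.tournament
  obtain ⟨c, hc, hc2, h₁, h₂⟩ :=
    C.exists_midpoint_ne_of_lt (a := 1) (b := 6) (by omega) (by omega) 2
  have h15 : r (u 1) (u 5) := by interval_cases c <;> grind [hT.asymm, hT.1, C.rel_succ]
  obtain ⟨c, hc, hc6, h₁, h₂⟩ :=
    C.exists_midpoint_ne_of_lt (a := 3) (b := 4) (by omega) (by omega) 6
  have h14 : r (u 1) (u 4) := by interval_cases c <;> grind [hT.asymm, hT.1, C.rel_succ]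
  obtain ⟨c, hc, hc0, h₁, h₂⟩ :=
    C.exists_midpoint_ne_of_lt (a := 4) (b := 5) (by omega) (by omega) 0
  have h25 : r (u 2) (u 5) := by interval_cases c <;> grind [hT.asymm, hT.1, C.rel_succ]
  obtain ⟨c, hc, hc3, h₁, h₂⟩ :=
    C.exists_midpoint_ne_of_lt (a := 5) (b := 6) (by omega) (by omega) 3
  interval_cases c <;> grind [hT.asymm, hT.1, C.rel_succ]

theorem midpoints_succ_self_eq (C : Counterexample r u p π) {K : ℕ} (hK : 1 ≤ K)
    (hKp : K + 3 ≤ p) (hK1 : ¬ HasThresholdVertex r u p (K + 1))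
    (hbelow : ∀ c, c + 2 ≤ K → r (u K) (u c))
    (habove : ∀ b, K + 2 < b → b < p → r (u b) (u (K + 1))) :
    midpoints r u p (K + 1) K = {K - 1, K + 2} := by
  have hT := C.tournament
  have hsub : midpoints r u p (K + 1) K ⊆ {K - 1, K + 2} := by
    intro c hc
    obtain ⟨hc, h₁, h₂⟩ := mem_midpoints.mp hc
    simp only [Finset.mem_insert, Finset.mem_singleton]
    obtain h | h | rfl | rfl | h | h : c + 2 ≤ K ∨ c = K - 1 ∨ c = K ∨ c = K + 1 ∨ c = K + 2 ∨
      K + 3 ≤ c := by omega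
    · exact absurd h₂ (hT.asymm (hbelow c h))
    · exact .inl h
    · exact absurd h₂ (hT.1 _)
    · exact absurd h₁ (hT.1 _)
    · exact .inr h
    · exact absurd h₁ (hT.asymm (habove c (by omega) hc))
  refine Finset.eq_of_subset_of_card_le hsub ?_
  calc ({K - 1, K + 2} : Finset ℕ).card ≤ 2 := Finset.card_le_two
    _ ≤ π := C.two_le_pi
    _ ≤ _ := C.pi_le_card_midpoints C.isPi2 (by omega) (by omega) (by omega) fun t ht ht' => by
      rwa [show t = K + 1 by omega]

theorem not_hasThresholdVertex_of_isJumpThreshold_add_two (C : Counterexample r u p π) {K : ℕ}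
    (hK2 : 2 ≤ K) (hk : IsJumpThreshold r u p (K + 2)) (hmin : ¬ IsJumpThreshold r u p K)
    (hK1 : ¬ HasThresholdVertex r u p (K + 1)) : ¬ HasThresholdVertex r u p K := by
  intro hK
  have ⟨wK, hwK, hthrK⟩ := hK
  obtain ⟨⟨w, hw, hthr⟩, hkp, a, ha, hak⟩ := hk
  have hT := C.tournament
  have habove (b : ℕ) (hb : K + 2 < b) (hbp : b < p) : r (u b) (u (K + 1)) := by
    simpa using C.rel_pred_of_isThreshold hw hthr (by omega) hak hb hbp
  have hbelow (c : ℕ) (hc : c + 2 ≤ K) : r (u K) (u c) :=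
    C.rel_of_not_isJumpThreshold hK (by omega) hmin hc
  have hM := C.midpoints_succ_self_eq (by omega) (by omega) hK1 hbelow habove
  have hπ : π ≤ 2 := (hM ▸ C.pi_le_card_midpoints C.isPi2 (a := K + 1) (b := K) (by omega)
    (by omega) (by omega) fun t ht ht' => by rwa [show t = K + 1 by omega]).trans Finset.card_le_two
  have hc : K - 1 ∈ midpoints r u p (K + 1) K ∧ K + 2 ∈ midpoints r u p (K + 1) K := by simp [hM]
  obtain ⟨-, hc1, -⟩ := mem_midpoints.mp hc.1
  obtain ⟨-, -, hc2⟩ := mem_midpoints.mp hc.2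
  obtain ⟨z₂, hz₂, hz₂K, h₃, h₄⟩ := C.exists_midpoint_pred_self (by omega) (by omega) hbelow
  obtain ⟨z₁, hz₁, hne, h₅, h₆⟩ :=
    C.exists_midpoint_ne_of_lt (a := K + 1) (b := K + 2) (by omega) (by omega) (K - 1)
  have hz₁K : z₁ + 2 ≤ K := by
    rcases C.midpoint_far (by omega) (by omega) hz₁ h₅ h₆ with h | h
    · omega
    · exact absurd h₅ (hT.asymm (habove _ (by omega) hz₁))
  have hz₂K' : z₂ ≠ K + 3 := by
    rintro rfl
    exact C.not_rel_pred_add_three hwK hthrK (by omega) hc2 hz₁K h₆ h₃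
  have hz₁K' : z₁ ≠ K - 2 := by
    rintro rfl
    exact C.not_rel_sub_two_add_two hw hthr hK2 hc1 hz₂K hz₂ h₃ h₆
  have := C.lt
  obtain rfl : p = 8 := by omega
  obtain rfl : K = 3 := by omega
  obtain rfl : z₂ = 7 := by omega
  obtain rfl : z₁ = 0 := by omega
  exact C.false_of_eight (hbelow 1 le_rfl) (habove 6 (by omega) (by omega))
    (habove 7 (by omega) (by omega)) hc2 h₄ h₅ h₆

theorem false (C : Counterexample r u p π) : False := by
  classical
  obtain ⟨k, hk, hmin⟩ : ∃ k, IsJumpThreshold r u p k ∧ ∀ m < k, ¬ IsJumpThreshold r u p m :=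
    ⟨_, Nat.find_spec C.exists_isJumpThreshold, fun _ => Nat.find_min _⟩
  have h4 := C.four_le_of_isJumpThreshold hk
  obtain ⟨i, rfl⟩ : ∃ i, k = i + 3 := ⟨k - 3, by omega⟩
  by_cases hK1 : HasThresholdVertex r u p (i + 2)
  · exact C.not_hasThresholdVertex_of_isJumpThreshold_succ hk (hmin _ (by omega)) hK1
  · refine C.not_hasThresholdVertex_of_isJumpThreshold_add_two (K := i + 1) (by omega) hk
      (hmin _ (by omega)) hK1 ?_
    exact (C.hasThresholdVertex_of_add_three_le (by have := hk.2.1; omega)).resolve_right hK1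

end Counterexample

theorem three_mul_add_three_le_of_isPi2 (S : NonextendablePath r u p) (hπ : IsPi2 r π)
    (hπ1 : 1 ≤ π) : 3 * π + 3 ≤ p := by
  by_contra! h
  exact Counterexample.false ⟨S, hπ, hπ1, h⟩

end NonextendablePath

end

theorem stmt9 (r : V → V → Prop) [DecidableRel r] (hT : IsTournament r)
    (π : ℕ) (hπ : IsPi2 r π) (hπ1 : 1 ≤ π)
    (l : List V) (hl : IsDirPath r l) (hlen : 2 ≤ l.length)
    (hne : ¬ Extendable r l) :
    3 * π + 3 ≤ l.length := by
  obtain ⟨p, u, rfl⟩ := List.exists_eq_map_range (l := l) (by rintro rfl; simp at hlen)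
  simp only [List.length_map, List.length_range] at hlen ⊢
  exact (NonextendablePath.of_isDirPath hT hl hlen hne).three_mul_add_three_le_of_isPi2 hπ hπ1
end
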